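/- arXiv:1812.07843 — 4 statements merged into one kernel-verified Lean document; each statement's English description precedes it below -/
import Mathlib

section
/- Let Ω be a measure space with 0 < μ(Ω) < ∞ and let f be a measurable function lying in L^p(Ω) for every p ∈ [1,∞) with ‖f‖_{1,∞)} = sup_{1≤p<∞} p^{-1} ((1/μ(Ω)) ∫_Ω |f|^p dμ)^{1/p} < ∞. Then there exists λ > 0 such that ∫_Ω e^{λ|f(x)|} dμ(x) < ∞; that is, L^{1,∞)}(Ω) ⊆ EXP(Ω). -/
/-! Taking `p = n` in the supremum defining `‖f‖_{1,∞)} = M` gives the moment bounds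
`∫ |f|^n ≤ μ(Ω) (n M)^n`. Expanding `e^{λ|f|}` in its power series and using
`n^n / n! ≤ e^n`, the `n`-th term of `∫ e^{λ|f|}` is at most `μ(Ω) (λ e M)^n`, a convergent
geometric series as soon as `λ < 1 / (e M)`. -/

open MeasureTheory ENNReal

/-- The grand exponential-class norm `‖f‖_{θ,∞)}`:
`sup_{1 ≤ p < ∞} p^{-θ} ((1/μ(Ω)) ∫_Ω |f|^p dμ)^{1/p}`, valued in `ℝ≥0∞`. -/
noncomputable def grandNorm {α : Type*} [MeasurableSpace α] (μ : Measure α) (θ : ℝ)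
    (f : α → ℝ) : ℝ≥0∞ :=
  ⨆ (p : ℝ) (_ : 1 ≤ p),
    ENNReal.ofReal p ^ (-θ) * ((μ Set.univ)⁻¹ * ∫⁻ x, (‖f x‖₊ : ℝ≥0∞) ^ p ∂μ) ^ (1 / p)

open Real Nat

lemma ENNReal.ofReal_exp_eq_tsum {y : ℝ} (hy : 0 ≤ y) :
    ENNReal.ofReal (exp y) = ∑' n : ℕ, ENNReal.ofReal (y ^ n / n !) := by
  have h := NormedSpace.expSeries_div_hasSum_exp y
  rw [← Real.exp_eq_exp_ℝ] at h
  rw [← h.tsum_eq]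
  exact ENNReal.ofReal_tsum_of_nonneg (fun n => by positivity) h.summable

lemma inv_two_mul_exp_one_mul_pow_div_factorial_mul_pow_le {C : ℝ} (hC : 0 < C) (n : ℕ) :
    (2 * exp 1 * C)⁻¹ ^ n / n ! * (n * C) ^ n ≤ 2⁻¹ ^ n := by
  have hn : (n : ℝ) ^ n / n ! ≤ exp 1 ^ n := by
    rw [← exp_nat_mul, mul_one]
    exact pow_div_factorial_le_exp _ n.cast_nonneg n
  calc (2 * exp 1 * C)⁻¹ ^ n / n ! * (n * C) ^ n
      = 2⁻¹ ^ n * ((n : ℝ) ^ n / n ! / exp 1 ^ n) := by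
        field_simp
        rw [← mul_pow, ← mul_pow, ← mul_pow]
        field_simp
    _ ≤ 2⁻¹ ^ n * 1 := by
        gcongr
        exact (div_le_one (by positivity)).mpr hn
    _ = 2⁻¹ ^ n := mul_one _

section GrandNorm

variable {α : Type*} [MeasurableSpace α] (μ : Measure α)

lemma lintegral_rpow_le_of_grandNorm (hμ : μ Set.univ ≠ ⊤) (θ : ℝ) (f : α → ℝ) {p : ℝ}
    (hp : 1 ≤ p) :
    ∫⁻ x, (‖f x‖₊ : ℝ≥0∞) ^ p ∂μ ≤
      μ Set.univ * (ENNReal.ofReal p ^ θ * grandNorm μ θ f) ^ p := by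
  rcases eq_or_ne (μ Set.univ) 0 with hμ0 | hμ0
  · simp [Measure.measure_univ_eq_zero.mp hμ0]
  set I := ∫⁻ x, (‖f x‖₊ : ℝ≥0∞) ^ p ∂μ
  have hp0 : 0 < p := by linarith
  have hP : ENNReal.ofReal p ≠ 0 := by simpa using hp0
  have hterm : ENNReal.ofReal p ^ (-θ) * ((μ Set.univ)⁻¹ * I) ^ (1 / p) ≤ grandNorm μ θ f :=
    le_iSup₂ (f := fun (q : ℝ) (_ : 1 ≤ q) =>
      ENNReal.ofReal q ^ (-θ) * ((μ Set.univ)⁻¹ * ∫⁻ x, (‖f x‖₊ : ℝ≥0∞) ^ q ∂μ) ^ (1 / q)) p hp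
  have hroot : ((μ Set.univ)⁻¹ * I) ^ p⁻¹ ≤ ENNReal.ofReal p ^ θ * grandNorm μ θ f := by
    calc ((μ Set.univ)⁻¹ * I) ^ p⁻¹
        = ENNReal.ofReal p ^ θ * (ENNReal.ofReal p ^ (-θ) * ((μ Set.univ)⁻¹ * I) ^ (1 / p)) := by
          rw [← mul_assoc, ← ENNReal.rpow_add _ _ hP ofReal_ne_top, add_neg_cancel,
            ENNReal.rpow_zero, one_mul, one_div]
      _ ≤ _ := by gcongr
  rw [ENNReal.rpow_inv_le_iff hp0, ENNReal.inv_mul_le_iff hμ0 hμ] at hroot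
  exact hroot

lemma lintegral_pow_le_of_grandNorm (hμ : μ Set.univ ≠ ⊤) (θ : ℝ) (f : α → ℝ) (n : ℕ) :
    ∫⁻ x, (‖f x‖₊ : ℝ≥0∞) ^ n ∂μ ≤
      μ Set.univ * (ENNReal.ofReal n ^ θ * grandNorm μ θ f) ^ n := by
  rcases n.eq_zero_or_pos with rfl | hn
  · simp
  · simpa only [ENNReal.rpow_natCast] using
      lintegral_rpow_le_of_grandNorm μ hμ θ f (p := n) (by exact_mod_cast hn)

lemma lintegral_exp_le_of_lintegral_pow_le {f : α → ℝ} (hf : Measurable f) {A : ℝ≥0∞}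
    {C : ℝ} (hC : 0 < C)
    (hmoment : ∀ n : ℕ, ∫⁻ x, (‖f x‖₊ : ℝ≥0∞) ^ n ∂μ ≤ A * ENNReal.ofReal (n * C) ^ n) :
    ∫⁻ x, ENNReal.ofReal (exp ((2 * exp 1 * C)⁻¹ * |f x|)) ∂μ ≤ 2 * A := by
  set lam := (2 * exp 1 * C)⁻¹
  have hseries : ∀ x, ENNReal.ofReal (exp (lam * |f x|)) =
      ∑' n : ℕ, ENNReal.ofReal (lam ^ n / n !) * (‖f x‖₊ : ℝ≥0∞) ^ n := by
    intro x
    rw [ENNReal.ofReal_exp_eq_tsum (by positivity)]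
    congr 1 with n
    rw [mul_pow, mul_div_right_comm, ENNReal.ofReal_mul (by positivity),
      ENNReal.ofReal_pow (abs_nonneg _), ← Real.enorm_eq_ofReal_abs, enorm_eq_nnnorm]
  have hterm : ∀ n : ℕ, ENNReal.ofReal (lam ^ n / n !) * (A * ENNReal.ofReal (n * C) ^ n) ≤
      A * 2⁻¹ ^ n := by
    intro n
    rw [mul_left_comm, ← ENNReal.ofReal_pow (by positivity), ← ENNReal.ofReal_mul (by positivity)]
    gcongr
    calc ENNReal.ofReal (lam ^ n / n ! * (n * C) ^ n)
        ≤ ENNReal.ofReal (2⁻¹ ^ n) :=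
          ENNReal.ofReal_le_ofReal (inv_two_mul_exp_one_mul_pow_div_factorial_mul_pow_le hC n)
      _ = 2⁻¹ ^ n := by
          rw [ENNReal.ofReal_pow (by norm_num), ENNReal.ofReal_inv_of_pos two_pos,
            ENNReal.ofReal_ofNat]
  calc ∫⁻ x, ENNReal.ofReal (exp (lam * |f x|)) ∂μ
      = ∑' n : ℕ, ENNReal.ofReal (lam ^ n / n !) * ∫⁻ x, (‖f x‖₊ : ℝ≥0∞) ^ n ∂μ := by
        simp_rw [hseries]
        rw [lintegral_tsum fun n => ((hf.nnnorm.coe_nnreal_ennreal.pow_const n).const_mul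
          _).aemeasurable]
        congr 1 with n
        exact lintegral_const_mul _ (hf.nnnorm.coe_nnreal_ennreal.pow_const n)
    _ ≤ ∑' n : ℕ, A * 2⁻¹ ^ n :=
        ENNReal.tsum_le_tsum fun n => (mul_le_mul_right (hmoment n) _).trans (hterm n)
    _ = 2 * A := by rw [ENNReal.tsum_mul_left, ENNReal.tsum_geometric_two, mul_comm]

end GrandNorm

theorem exp_integrable_of_grandNorm_one_lt_top_general {α : Type*} [MeasurableSpace α] (μ : Measure α)
    (hμtop : μ Set.univ ≠ ⊤)
    (f : α → ℝ) (hmeas : Measurable f)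
    (hnorm : grandNorm μ 1 f < ⊤) :
    ∃ lam : ℝ, 0 < lam ∧ ∫⁻ x, ENNReal.ofReal (Real.exp (lam * |f x|)) ∂μ < ⊤ := by
  set C : ℝ := (grandNorm μ 1 f).toReal + 1
  have hC : 0 < C := by positivity
  have hmoment (n : ℕ) :
      ∫⁻ x, (‖f x‖₊ : ℝ≥0∞) ^ n ∂μ ≤ μ Set.univ * ENNReal.ofReal (n * C) ^ n := by
    refine (lintegral_pow_le_of_grandNorm μ hμtop 1 f n).trans ?_
    rw [ENNReal.rpow_one, ENNReal.ofReal_mul n.cast_nonneg]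
    gcongr
    exact (ENNReal.le_ofReal_iff_toReal_le hnorm.ne hC.le).mpr (by linarith)
  refine ⟨(2 * exp 1 * C)⁻¹, by positivity, ?_⟩
  exact (lintegral_exp_le_of_lintegral_pow_le μ hmeas hC hmoment).trans_lt
    (ENNReal.mul_lt_top (by simp) hμtop.lt_top)

/-- `L^{1,∞)}(Ω) ⊆ EXP(Ω)`. -/
theorem exp_integrable_of_grandNorm_one_lt_top {α : Type*} [MeasurableSpace α] (μ : Measure α)
    (hμ0 : μ Set.univ ≠ 0) (hμtop : μ Set.univ ≠ ⊤)
    (f : α → ℝ) (hmeas : Measurable f)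
    (hf : ∀ p : ℝ, 1 ≤ p → MemLp f (ENNReal.ofReal p) μ)
    (hnorm : grandNorm μ 1 f < ⊤) :
    ∃ lam : ℝ, 0 < lam ∧ ∫⁻ x, ENNReal.ofReal (Real.exp (lam * |f x|)) ∂μ < ⊤ :=
  exp_integrable_of_grandNorm_one_lt_top_general μ hμtop f hmeas hnorm
end

section
/- Let 0 < θ ≤ 1 and consider the function f(x) = (−ln x)^θ on the interval Ω = (0,1) with Lebesgue measure. Then f ∉ L^∞(0,1) (f is not essentially bounded), yet f ∈ L^p(0,1) for every p ∈ [1,∞) and sup_{1≤p<∞} p^{-θ} (∫_0^1 (−ln x)^{pθ} dx)^{1/p} ≤ 2, so that f ∈ L^{θ,∞)}(0,1). Consequently, for every θ > 0, L^∞(Ω) is a proper subspace of L^{θ,∞)}(Ω). -/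
open MeasureTheory ENNReal

/-!
Since `p^{-θ} ≤ 1`, the grand norm of any function is at most its essential supremum. For
`f = (-ln x)^θ`, the elementary bound `t^s ≤ s^s e^{t/2}` at `t = -ln x` gives
`∫_0^1 (-ln x)^s dx ≤ s^s ∫_0^1 x^{-1/2} dx = 2 s^s`; with `s = θp` the `p`-th root of the
`p`-th moment of `f` is at most `2^{1/p} θ^θ p^θ ≤ 2 p^θ`. Finally `f` is not essentially
bounded because `-ln x → ∞` as `x → 0⁺`.
-/

open Set Filter Topology

theorem grandNorm_le_eLpNormEssSup {α : Type*} [MeasurableSpace α] (μ : Measure α) {θ : ℝ}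
    (hθ : 0 ≤ θ) (g : α → ℝ) : grandNorm μ θ g ≤ eLpNormEssSup g μ := by
  refine iSup₂_le fun p hp => ?_
  set C := eLpNormEssSup g μ
  have hp0 : 0 < p := by linarith
  have hmean : (μ univ)⁻¹ * ∫⁻ x, (‖g x‖₊ : ℝ≥0∞) ^ p ∂μ ≤ C ^ p :=
    calc (μ univ)⁻¹ * ∫⁻ x, (‖g x‖₊ : ℝ≥0∞) ^ p ∂μ
        ≤ (μ univ)⁻¹ * ∫⁻ _, C ^ p ∂μ := by
          gcongr (μ univ)⁻¹ * ?_
          exact lintegral_mono_ae ((ae_le_eLpNormEssSup (f := g)).mono fun x hx =>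
            ENNReal.rpow_le_rpow hx hp0.le)
      _ = μ univ * (C ^ p / μ univ) := by rw [lintegral_const, div_eq_mul_inv]; ring
      -- no case split on `μ univ ∈ {0, ∞}` is needed: `ENNReal.mul_div_le` holds there too
      _ ≤ C ^ p := ENNReal.mul_div_le
  have hweight : ENNReal.ofReal p ^ (-θ) ≤ 1 := by
    simpa using ENNReal.rpow_le_rpow_of_exponent_le (ENNReal.one_le_ofReal.2 hp)
      (neg_nonpos.2 hθ)
  calc ENNReal.ofReal p ^ (-θ) * ((μ univ)⁻¹ * ∫⁻ x, (‖g x‖₊ : ℝ≥0∞) ^ p ∂μ) ^ (1 / p)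
      ≤ 1 * (C ^ p) ^ (1 / p) := by gcongr
    _ = C := by rw [one_mul, ← ENNReal.rpow_mul, mul_one_div_cancel hp0.ne', ENNReal.rpow_one]

theorem MeasureTheory.MemLp.grandNorm_lt_top {α : Type*} [MeasurableSpace α] {μ : Measure α}
    {θ : ℝ} {g : α → ℝ} (hg : MemLp g ⊤ μ) (hθ : 0 ≤ θ) : grandNorm μ θ g < ⊤ :=
  (grandNorm_le_eLpNormEssSup μ hθ g).trans_lt (by simpa using hg.eLpNorm_lt_top)

theorem not_memLp_top_restrict_Ioo_of_tendsto {E : Type*} [NormedAddCommGroup E] {f : ℝ → E}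
    {a b : ℝ} (hab : a < b) (hf : Tendsto (fun x => ‖f x‖) (𝓝[>] a) atTop) :
    ¬ MemLp f ⊤ (volume.restrict (Ioo a b)) := by
  intro hf_mem
  set C := eLpNormEssSup f (volume.restrict (Ioo a b))
  have hC : C ≠ ⊤ := by simpa using hf_mem.eLpNorm_ne_top
  obtain ⟨u, hau, hsub⟩ := mem_nhdsGT_iff_exists_Ioo_subset.1 (hf.eventually_gt_atTop C.toReal)
  have hnull : volume.restrict (Ioo a (min u b)) = 0 := by
    have hle : volume.restrict (Ioo a (min u b)) ≤ volume.restrict (Ioo a b) :=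
      Measure.restrict_mono (Ioo_subset_Ioo_right (min_le_right _ _)) le_rfl
    rw [← ae_eq_bot, ← eventually_false_iff_eq_bot]
    filter_upwards [ae_mono hle (ae_le_eLpNormEssSup (f := f)),
      ae_restrict_mem measurableSet_Ioo] with x hx hmem
    have hgt : C.toReal < ‖f x‖ := hsub ⟨hmem.1, hmem.2.trans_le (min_le_left _ _)⟩
    rw [← ofReal_norm, ENNReal.ofReal_le_iff_le_toReal hC] at hx
    exact hgt.not_ge hx
  simp [Measure.restrict_eq_zero, Real.volume_Ioo, (mem_Ioi.1 hau).not_ge, hab.not_ge] at hnull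

theorem rpow_le_rpow_self_mul_exp_half {s t : ℝ} (hs : 0 < s) (ht : 0 < t) :
    t ^ s ≤ s ^ s * Real.exp (t / 2) := by
  -- `log u ≤ u - 1` at `u = t / (2s)`, together with `log 2 < 1`
  have hlog : Real.log t ≤ Real.log s + t / (2 * s) := by
    have h := Real.log_le_sub_one_of_pos (show 0 < t / (2 * s) by positivity)
    rw [Real.log_div ht.ne' (by positivity), Real.log_mul two_ne_zero hs.ne'] at h
    linarith [Real.log_two_lt_d9]
  calc t ^ s = Real.exp (s * Real.log t) := by rw [Real.rpow_def_of_pos ht, mul_comm]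
    _ ≤ Real.exp (s * Real.log s + t / 2) := by
        gcongr
        calc s * Real.log t ≤ s * (Real.log s + t / (2 * s)) := by gcongr
          _ = s * Real.log s + t / 2 := by field_simp
    _ = s ^ s * Real.exp (t / 2) := by
        rw [Real.exp_add, Real.rpow_def_of_pos hs, mul_comm (Real.log s)]

theorem lintegral_Ioo_zero_one_rpow_neg_half :
    ∫⁻ x in Ioo (0 : ℝ) 1, ENNReal.ofReal (x ^ (-(1 / 2) : ℝ)) = 2 := by
  have hint : IntegrableOn (fun x : ℝ => x ^ (-(1 / 2) : ℝ)) (Ioo 0 1) :=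
    (intervalIntegral.intervalIntegrable_rpow' (by norm_num)).1.mono_set Ioo_subset_Ioc_self
  rw [← ofReal_integral_eq_lintegral_ofReal hint
      (ae_restrict_of_forall_mem measurableSet_Ioo fun x hx => Real.rpow_nonneg hx.1.le _),
    ← integral_Ioc_eq_integral_Ioo, ← intervalIntegral.integral_of_le zero_le_one,
    integral_rpow (Or.inl (by norm_num))]
  norm_num

theorem lintegral_Ioo_zero_one_neg_log_rpow_le {s : ℝ} (hs : 0 < s) :
    ∫⁻ x in Ioo (0 : ℝ) 1, ENNReal.ofReal ((-Real.log x) ^ s) ≤ ENNReal.ofReal (2 * s ^ s) := by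
  calc ∫⁻ x in Ioo (0 : ℝ) 1, ENNReal.ofReal ((-Real.log x) ^ s)
      ≤ ∫⁻ x in Ioo (0 : ℝ) 1,
          ENNReal.ofReal (s ^ s) * ENNReal.ofReal (x ^ (-(1 / 2) : ℝ)) := by
        refine setLIntegral_mono (by fun_prop) fun x hx => ?_
        rw [← ENNReal.ofReal_mul (by positivity)]
        gcongr
        calc (-Real.log x) ^ s ≤ s ^ s * Real.exp (-Real.log x / 2) :=
              rpow_le_rpow_self_mul_exp_half hs (neg_pos.2 (Real.log_neg hx.1 hx.2))
          _ = s ^ s * x ^ (-(1 / 2) : ℝ) := by rw [Real.rpow_def_of_pos hx.1]; ring_nf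
    _ = ENNReal.ofReal (2 * s ^ s) := by
        rw [lintegral_const_mul _ (by fun_prop), lintegral_Ioo_zero_one_rpow_neg_half,
          ENNReal.ofReal_mul zero_le_two, ofReal_ofNat, mul_comm]

theorem lintegral_Ioo_zero_one_nnnorm_neg_log_rpow_rpow_le {θ p : ℝ} (hθ : 0 < θ)
    (hp : 0 < p) :
    ∫⁻ x in Ioo (0 : ℝ) 1, (‖(-Real.log x) ^ θ‖₊ : ℝ≥0∞) ^ p
      ≤ ENNReal.ofReal (2 * (θ * p) ^ (θ * p)) :=
  calc ∫⁻ x in Ioo (0 : ℝ) 1, (‖(-Real.log x) ^ θ‖₊ : ℝ≥0∞) ^ p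
      = ∫⁻ x in Ioo (0 : ℝ) 1, ENNReal.ofReal ((-Real.log x) ^ (θ * p)) :=
        setLIntegral_congr_fun measurableSet_Ioo fun x hx => by
          have hpos : 0 ≤ -Real.log x := neg_nonneg.2 (Real.log_nonpos hx.1.le hx.2.le)
          rw [← enorm_eq_nnnorm, Real.enorm_eq_ofReal (Real.rpow_nonneg hpos θ),
            ENNReal.ofReal_rpow_of_nonneg (Real.rpow_nonneg hpos θ) hp.le,
            ← Real.rpow_mul hpos]
    _ ≤ _ := lintegral_Ioo_zero_one_neg_log_rpow_le (by positivity)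

theorem two_mul_rpow_self_rpow_one_div_le {θ p : ℝ} (hθ0 : 0 < θ) (hθ1 : θ ≤ 1) (hp : 1 ≤ p) :
    (2 * (θ * p) ^ (θ * p)) ^ (1 / p) ≤ 2 * p ^ θ := by
  have hp0 : 0 < p := by linarith
  have hexp : θ * p * (1 / p) = θ := by field_simp
  calc (2 * (θ * p) ^ (θ * p)) ^ (1 / p) = 2 ^ (1 / p) * θ ^ θ * p ^ θ := by
        rw [Real.mul_rpow zero_le_two (by positivity), ← Real.rpow_mul (by positivity), hexp,
          Real.mul_rpow hθ0.le hp0.le, mul_assoc]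
    _ ≤ 2 ^ (1 : ℝ) * 1 * p ^ θ := by
        gcongr
        · exact one_le_two
        · exact (div_le_one hp0).2 hp
        · exact Real.rpow_le_one hθ0.le hθ1 hθ0.le
    _ = 2 * p ^ θ := by rw [Real.rpow_one, mul_one]

theorem ofReal_rpow_neg_mul_lintegral_neg_log_rpow_le_two {θ p : ℝ} (hθ0 : 0 < θ) (hθ1 : θ ≤ 1)
    (hp : 1 ≤ p) :
    ENNReal.ofReal p ^ (-θ) *
      (∫⁻ x in Ioo (0 : ℝ) 1, (‖(-Real.log x) ^ θ‖₊ : ℝ≥0∞) ^ p) ^ (1 / p) ≤ 2 := by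
  have hp0 : 0 < p := by linarith
  calc ENNReal.ofReal p ^ (-θ) *
        (∫⁻ x in Ioo (0 : ℝ) 1, (‖(-Real.log x) ^ θ‖₊ : ℝ≥0∞) ^ p) ^ (1 / p)
      ≤ ENNReal.ofReal p ^ (-θ) * ENNReal.ofReal (2 * (θ * p) ^ (θ * p)) ^ (1 / p) := by
        gcongr
        exact lintegral_Ioo_zero_one_nnnorm_neg_log_rpow_rpow_le hθ0 hp0
    _ = ENNReal.ofReal (p ^ (-θ) * (2 * (θ * p) ^ (θ * p)) ^ (1 / p)) := by
        rw [ofReal_rpow_of_pos hp0, ofReal_rpow_of_pos (by positivity),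
          ← ENNReal.ofReal_mul (by positivity)]
    _ ≤ ENNReal.ofReal (p ^ (-θ) * (2 * p ^ θ)) := by
        gcongr
        exact two_mul_rpow_self_rpow_one_div_le hθ0 hθ1 hp
    _ = 2 := by
        rw [mul_left_comm, ← Real.rpow_add hp0, neg_add_cancel, Real.rpow_zero, mul_one,
          ofReal_ofNat]

theorem grandNorm_neg_log_rpow_le_two {θ : ℝ} (hθ0 : 0 < θ) (hθ1 : θ ≤ 1) :
    grandNorm (volume.restrict (Ioo (0 : ℝ) 1)) θ (fun x => (-Real.log x) ^ θ) ≤ 2 := by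
  refine iSup₂_le fun p hp => ?_
  rw [Measure.restrict_apply_univ, Real.volume_Ioo, sub_zero, ofReal_one, inv_one, one_mul]
  exact ofReal_rpow_neg_mul_lintegral_neg_log_rpow_le_two hθ0 hθ1 hp

theorem memLp_neg_log_rpow {θ p : ℝ} (hθ : 0 < θ) (hp : 0 < p) :
    MemLp (fun x => (-Real.log x) ^ θ) (ENNReal.ofReal p)
      (volume.restrict (Ioo (0 : ℝ) 1)) := by
  refine ⟨(Real.measurable_log.neg.pow_const θ).aestronglyMeasurable, ?_⟩
  rw [eLpNorm_lt_top_iff_lintegral_rpow_enorm_lt_top (ofReal_pos.2 hp).ne' ofReal_ne_top,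
    toReal_ofReal hp.le]
  simp only [enorm_eq_nnnorm]
  exact (lintegral_Ioo_zero_one_nnnorm_neg_log_rpow_rpow_le hθ hp).trans_lt ofReal_lt_top

/-- for `0 < θ ≤ 1`, the function `f(x) = (-ln x)^θ` on `(0,1)` is not in
`L^∞(0,1)`, but lies in every `L^p(0,1)` with `‖f‖_{θ,∞)} ≤ 2`; consequently `L^∞` is a
proper subspace of `L^{θ,∞)}`. -/
theorem linfty_proper_subspace_grand (θ : ℝ) (hθ0 : 0 < θ) (hθ1 : θ ≤ 1) :
    ¬ MemLp (fun x => (-Real.log x) ^ θ) ⊤ (volume.restrict (Set.Ioo (0:ℝ) 1)) ∧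
    (∀ p : ℝ, 1 ≤ p →
      MemLp (fun x => (-Real.log x) ^ θ) (ENNReal.ofReal p)
        (volume.restrict (Set.Ioo (0:ℝ) 1))) ∧
    grandNorm (volume.restrict (Set.Ioo (0:ℝ) 1)) θ (fun x => (-Real.log x) ^ θ) ≤ 2 ∧
    (∀ g : ℝ → ℝ, MemLp g ⊤ (volume.restrict (Set.Ioo (0:ℝ) 1)) →
      grandNorm (volume.restrict (Set.Ioo (0:ℝ) 1)) θ g < ⊤) := by
  have hblowup : Tendsto (fun x => ‖(-Real.log x) ^ θ‖) (𝓝[>] 0) atTop :=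
    tendsto_norm_atTop_atTop.comp
      ((tendsto_rpow_atTop hθ0).comp
        (tendsto_neg_atBot_atTop.comp Real.tendsto_log_nhdsGT_zero))
  exact ⟨not_memLp_top_restrict_Ioo_of_tendsto zero_lt_one hblowup,
    fun p hp => memLp_neg_log_rpow hθ0 (by linarith),
    grandNorm_neg_log_rpow_le_two hθ0 hθ1,
    fun g hg => hg.grandNorm_lt_top hθ0.le⟩
end

section
/- Let Ω be a measure space with 0 < μ(Ω) < ∞ and let 0 ≤ θ < ∞. Then (L^{θ,∞)}(Ω), ‖·‖_{θ,∞)}) is a Banach space: every sequence {fₙ} in L^{θ,∞)}(Ω) that is Cauchy with respect to the norm ‖·‖_{θ,∞)} converges in this norm to some f ∈ L^{θ,∞)}(Ω). -/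
open MeasureTheory ENNReal

/-! A Cauchy sequence for `‖·‖_{θ,∞)}` is Cauchy in `L¹`, because the `p = 1` term of the
supremum is `‖·‖₁ / μ(Ω)`; hence a subsequence converges a.e. to some `f`. Fatou's lemma in each
`Lᵖ`, weighted by `p^{-θ} μ(Ω)^{-1/p}`, makes the norm lower semicontinuous under a.e.
convergence, so `‖F n - f‖ ≤ ε` as soon as `‖F n - F m‖ < ε` for all large `m`. The triangle
inequality then gives `‖f‖ < ∞`, and finiteness of the norm forces `f ∈ Lᵖ` for every `p`. -/

open Filter Topology

theorem exists_subseq_ae_tendsto_of_cauchy_eLpNorm {α E : Type*}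
    [MeasurableSpace α] {μ : Measure α} [NormedAddCommGroup E] [CompleteSpace E]
    {p : ℝ≥0∞} [Fact (1 ≤ p)] {F : ℕ → α → E} (hF : ∀ n, MemLp (F n) p μ)
    (hcau : ∀ ε > 0, ∃ N, ∀ m ≥ N, ∀ n ≥ N, eLpNorm (F m - F n) p μ < ε) :
    ∃ (ns : ℕ → ℕ) (f : α → E), StrictMono ns ∧ AEStronglyMeasurable f μ ∧
      ∀ᵐ x ∂μ, Tendsto (fun k => F (ns k) x) atTop (𝓝 (f x)) := by
  set G : ℕ → Lp E p μ := fun n => (hF n).toLp (F n)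
  have hG : CauchySeq G := EMetric.cauchySeq_iff.mpr fun ε hε => by
    obtain ⟨N, hN⟩ := hcau ε hε
    exact ⟨N, fun m hm n hn => by simpa [G, Lp.edist_toLp_toLp] using hN m hm n hn⟩
  obtain ⟨g, hg⟩ := cauchySeq_tendsto_of_complete hG
  have hmeas : TendstoInMeasure μ F atTop g :=
    (tendstoInMeasure_of_tendsto_Lp hg).congr_left fun n => (hF n).coeFn_toLp
  obtain ⟨ns, hns, hlim⟩ := hmeas.exists_seq_tendsto_ae
  exact ⟨ns, g, hns, Lp.aestronglyMeasurable g, hlim⟩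

section GrandNorm

variable {α : Type*} [MeasurableSpace α] {μ : Measure α} {θ p : ℝ}

noncomputable def grandWeight (μ : Measure α) (θ p : ℝ) : ℝ≥0∞ :=
  ENNReal.ofReal p ^ (-θ) * (μ Set.univ)⁻¹ ^ (1 / p)

lemma grandWeight_ne_zero (hμtop : μ Set.univ ≠ ⊤) (hp : 1 ≤ p) : grandWeight μ θ p ≠ 0 := by
  have hp0 : 0 < p := by linarith
  simp [grandWeight, ENNReal.rpow_eq_zero_iff, hμtop, hp0, hp0.le]

lemma grandWeight_ne_top (hμ0 : μ Set.univ ≠ 0) (hp : 1 ≤ p) : grandWeight μ θ p ≠ ⊤ := by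
  have hp0 : 0 < p := by linarith
  refine ENNReal.mul_ne_top ?_ ?_ <;> simp [ENNReal.rpow_eq_top_iff, hμ0, hp0, hp0.le]

lemma grandWeight_one (μ : Measure α) (θ : ℝ) : grandWeight μ θ 1 = (μ Set.univ)⁻¹ := by
  simp [grandWeight]

lemma grandNorm_eq_iSup_grandWeight_mul_eLpNorm (μ : Measure α) (θ : ℝ) (f : α → ℝ) :
    grandNorm μ θ f =
      ⨆ (p : ℝ) (_ : 1 ≤ p), grandWeight μ θ p * eLpNorm f (ENNReal.ofReal p) μ := by
  refine iSup_congr fun p => iSup_congr fun hp => ?_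
  have hp0 : 0 < p := by linarith
  rw [grandWeight, mul_assoc, ENNReal.mul_rpow_of_nonneg _ _ (by positivity),
    eLpNorm_eq_lintegral_rpow_enorm_toReal (by simpa using hp0) ENNReal.ofReal_ne_top,
    ENNReal.toReal_ofReal hp0.le]
  simp only [enorm_eq_nnnorm]

lemma grandNorm_le_iff {f : α → ℝ} {ε : ℝ≥0∞} :
    grandNorm μ θ f ≤ ε ↔
      ∀ p : ℝ, 1 ≤ p → grandWeight μ θ p * eLpNorm f (ENNReal.ofReal p) μ ≤ ε := by
  rw [grandNorm_eq_iSup_grandWeight_mul_eLpNorm, iSup₂_le_iff]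

lemma grandWeight_mul_eLpNorm_le_grandNorm (f : α → ℝ) (hp : 1 ≤ p) :
    grandWeight μ θ p * eLpNorm f (ENNReal.ofReal p) μ ≤ grandNorm μ θ f :=
  grandNorm_le_iff.mp le_rfl p hp

lemma memLp_of_grandNorm_lt_top (hμtop : μ Set.univ ≠ ⊤) {f : α → ℝ}
    (hf : AEStronglyMeasurable f μ) (hfin : grandNorm μ θ f < ⊤) (hp : 1 ≤ p) :
    MemLp f (ENNReal.ofReal p) μ := by
  refine ⟨hf, lt_top_iff_ne_top.mpr fun htop => hfin.ne ?_⟩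
  simpa [htop, grandWeight_ne_zero hμtop hp] using
    grandWeight_mul_eLpNorm_le_grandNorm (μ := μ) (θ := θ) f hp

lemma eLpNorm_one_le_grandNorm (hμ0 : μ Set.univ ≠ 0) (hμtop : μ Set.univ ≠ ⊤) (f : α → ℝ) :
    eLpNorm f 1 μ ≤ μ Set.univ * grandNorm μ θ f := by
  rw [← ENNReal.inv_mul_le_iff hμ0 hμtop, ← grandWeight_one μ θ]
  simpa using grandWeight_mul_eLpNorm_le_grandNorm (μ := μ) (θ := θ) f le_rfl

lemma grandNorm_sub_le {f g : α → ℝ} (hf : AEStronglyMeasurable f μ)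
    (hg : AEStronglyMeasurable g μ) :
    grandNorm μ θ (f - g) ≤ grandNorm μ θ f + grandNorm μ θ g :=
  grandNorm_le_iff.mpr fun p hp => calc
    grandWeight μ θ p * eLpNorm (f - g) (ENNReal.ofReal p) μ
        ≤ grandWeight μ θ p * (eLpNorm f (ENNReal.ofReal p) μ + eLpNorm g (ENNReal.ofReal p) μ) :=
      mul_le_mul_right (eLpNorm_sub_le hf hg (ENNReal.one_le_ofReal.mpr hp)) _
    _ ≤ grandNorm μ θ f + grandNorm μ θ g := by
      rw [mul_add]
      exact add_le_add (grandWeight_mul_eLpNorm_le_grandNorm f hp)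
        (grandWeight_mul_eLpNorm_le_grandNorm g hp)

lemma grandNorm_le_of_ae_tendsto (hμ0 : μ Set.univ ≠ 0) (hμtop : μ Set.univ ≠ ⊤)
    {ι : Type*} {u : Filter ι} [NeBot u] [IsCountablyGenerated u]
    {G : ι → α → ℝ} {g : α → ℝ} {ε : ℝ≥0∞} (hG : ∀ i, AEStronglyMeasurable (G i) μ)
    (hlim : ∀ᵐ x ∂μ, Tendsto (G · x) u (𝓝 (g x)))
    (hbound : ∀ᶠ i in u, grandNorm μ θ (G i) ≤ ε) :
    grandNorm μ θ g ≤ ε := by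
  refine grandNorm_le_iff.mpr fun p hp => ?_
  have h0 := grandWeight_ne_zero (θ := θ) hμtop hp
  have htop := grandWeight_ne_top (θ := θ) hμ0 hp
  rw [mul_comm, ← ENNReal.le_div_iff_mul_le (Or.inl h0) (Or.inl htop)]
  refine Lp.eLpNorm_le_of_ae_tendsto (hbound.mono fun i hi => ?_) hG hlim
  rw [ENNReal.le_div_iff_mul_le (Or.inl h0) (Or.inl htop), mul_comm]
  exact (grandWeight_mul_eLpNorm_le_grandNorm _ hp).trans hi

lemma cauchy_eLpNorm_one_of_cauchy_grandNorm (hμ0 : μ Set.univ ≠ 0) (hμtop : μ Set.univ ≠ ⊤)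
    {F : ℕ → α → ℝ}
    (hcau : ∀ ε : ℝ≥0∞, 0 < ε → ∃ N : ℕ, ∀ m ≥ N, ∀ n ≥ N, grandNorm μ θ (F m - F n) < ε) :
    ∀ ε > 0, ∃ N, ∀ m ≥ N, ∀ n ≥ N, eLpNorm (F m - F n) 1 μ < ε := by
  intro ε hε
  obtain ⟨N, hN⟩ := hcau (ε / μ Set.univ) (ENNReal.div_pos_iff.mpr ⟨hε.ne', hμtop⟩)
  refine ⟨N, fun m hm n hn => ?_⟩
  calc eLpNorm (F m - F n) 1 μ ≤ μ Set.univ * grandNorm μ θ (F m - F n) :=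
        eLpNorm_one_le_grandNorm hμ0 hμtop _
    _ < μ Set.univ * (ε / μ Set.univ) := ENNReal.mul_lt_mul_right hμ0 hμtop (hN m hm n hn)
    _ = ε := ENNReal.mul_div_cancel hμ0 hμtop

end GrandNorm

theorem grandNorm_complete_general {α : Type*} [MeasurableSpace α] (μ : Measure α)
    (hμ0 : μ Set.univ ≠ 0) (hμtop : μ Set.univ ≠ ⊤)
    (θ : ℝ)
    (F : ℕ → α → ℝ) (hFm : ∀ n, Measurable (F n))
    (hFn : ∀ n, grandNorm μ θ (F n) < ⊤)
    (hcau : ∀ ε : ℝ≥0∞, 0 < ε → ∃ N : ℕ, ∀ m ≥ N, ∀ n ≥ N,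
      grandNorm μ θ (F m - F n) < ε) :
    ∃ f : α → ℝ,
      (∀ p : ℝ, 1 ≤ p → MemLp f (ENNReal.ofReal p) μ) ∧
      grandNorm μ θ f < ⊤ ∧
      Filter.Tendsto (fun n => grandNorm μ θ (F n - f)) Filter.atTop (nhds 0) := by
  have hFL1 : ∀ n, MemLp (F n) 1 μ := fun n => by
    simpa using memLp_of_grandNorm_lt_top hμtop (hFm n).aestronglyMeasurable (hFn n) le_rfl
  obtain ⟨ns, f, hns, hf, hlim⟩ := exists_subseq_ae_tendsto_of_cauchy_eLpNorm hFL1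
    (cauchy_eLpNorm_one_of_cauchy_grandNorm hμ0 hμtop hcau)
  have hconv : Tendsto (fun n => grandNorm μ θ (F n - f)) atTop (𝓝 0) := by
    refine ENNReal.tendsto_atTop_zero.mpr fun ε hε => ?_
    obtain ⟨N, hN⟩ := hcau ε hε
    refine ⟨N, fun n hn => grandNorm_le_of_ae_tendsto hμ0 hμtop
      (fun k => ((hFm n).sub (hFm (ns k))).aestronglyMeasurable)
      (hlim.mono fun x hx => tendsto_const_nhds.sub hx) ?_⟩
    exact (eventually_ge_atTop N).mono fun k hk => (hN n hn _ (hk.trans (hns.id_le k))).le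
  obtain ⟨N, hN⟩ := ENNReal.tendsto_atTop_zero.mp hconv 1 one_pos
  have hfin : grandNorm μ θ f < ⊤ := calc
    grandNorm μ θ f = grandNorm μ θ (F N - (F N - f)) := by rw [sub_sub_cancel (F N) f]
    _ ≤ grandNorm μ θ (F N) + grandNorm μ θ (F N - f) :=
      grandNorm_sub_le (hFm N).aestronglyMeasurable ((hFm N).aestronglyMeasurable.sub hf)
    _ < ⊤ := ENNReal.add_lt_top.mpr ⟨hFn N, (hN N le_rfl).trans_lt ENNReal.one_lt_top⟩
  exact ⟨f, fun p hp => memLp_of_grandNorm_lt_top hμtop hf hfin hp, hfin, hconv⟩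

/-- `(L^{θ,∞)}(Ω), ‖·‖_{θ,∞)})` is a Banach space: every Cauchy sequence
converges in the norm `‖·‖_{θ,∞)}` to an element of the space. -/
theorem grandNorm_complete {α : Type*} [MeasurableSpace α] (μ : Measure α)
    (hμ0 : μ Set.univ ≠ 0) (hμtop : μ Set.univ ≠ ⊤)
    (θ : ℝ) (hθ : 0 ≤ θ)
    (F : ℕ → α → ℝ) (hFm : ∀ n, Measurable (F n))
    (hF : ∀ n, ∀ p : ℝ, 1 ≤ p → MemLp (F n) (ENNReal.ofReal p) μ)
    (hFn : ∀ n, grandNorm μ θ (F n) < ⊤)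
    (hcau : ∀ ε : ℝ≥0∞, 0 < ε → ∃ N : ℕ, ∀ m ≥ N, ∀ n ≥ N,
      grandNorm μ θ (F m - F n) < ε) :
    ∃ f : α → ℝ,
      (∀ p : ℝ, 1 ≤ p → MemLp f (ENNReal.ofReal p) μ) ∧
      grandNorm μ θ f < ⊤ ∧
      Filter.Tendsto (fun n => grandNorm μ θ (F n - f)) Filter.atTop (nhds 0) :=
  grandNorm_complete_general μ hμ0 hμtop θ F hFm hFn hcau
end

section
/- Let Ω be a measure space with 0 < μ(Ω) < ∞ and let 0 ≤ θ < ∞. A measurable function f belongs to L^{θ,∞)}(Ω) if and only if it belongs to L^{θ,∞}_{weak}(Ω); that is, L^{θ,∞}_{weak}(Ω) = L^{θ,∞)}(Ω) as sets of measurable functions. -/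
/-!
Normalise `μ` to the probability measure `ν = μ(Ω)⁻¹ • μ`. Then the grand norm is
`sup_p p^{-θ} ‖f‖_{L^p(ν)}`, and `M_p(f)^p = sup_t t^p ν{|f| > t}` is the `p`-th power of the weak
`L^p(ν)` norm, so Chebyshev's inequality gives `M_p(f) ≤ ‖f‖_p`. Conversely, split the layer-cake
integral `‖f‖_p^p = p ∫_0^∞ t^{p-1} ν{|f| > t} dt` at the level `t₀ = M_{p+1}(f)`, bounding
`ν{|f| > t}` by `1` below it and by `M_{p+1}(f)^{p+1} t^{-p-1}` above it: this gives
`‖f‖_p^p ≤ (1 + p) M_{p+1}(f)^p`, hence `‖f‖_p ≤ 2 M_{p+1}(f)`. Together with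
`p^{-θ} ≤ 2^θ (p+1)^{-θ}` this bounds the grand norm by `2^{θ+1}` times the weak one.
-/

open MeasureTheory ENNReal

/-- The weak Marcinkiewicz quantity `M_p(f) = ((1/μ(Ω)) sup_{t>0} t^p μ{|f| > t})^{1/p}`. -/
noncomputable def weakMp {α : Type*} [MeasurableSpace α] (μ : Measure α) (p : ℝ)
    (f : α → ℝ) : ℝ≥0∞ :=
  ((μ Set.univ)⁻¹ * ⨆ (t : ℝ) (_ : 0 < t), ENNReal.ofReal t ^ p * μ {x | t < |f x|}) ^ (1 / p)

open Set Filter Topology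

lemma lintegral_Ioc_ofReal_rpow_sub_one {p : ℝ} (hp : 0 < p) {t₀ : ℝ} (ht₀ : 0 ≤ t₀) :
    ∫⁻ t in Ioc 0 t₀, ENNReal.ofReal (t ^ (p - 1)) = ENNReal.ofReal (t₀ ^ p / p) := by
  have hint : IntegrableOn (fun t : ℝ => t ^ (p - 1)) (Ioc 0 t₀) := by
    rw [← intervalIntegrable_iff_integrableOn_Ioc_of_le ht₀]
    exact intervalIntegral.intervalIntegrable_rpow' (by linarith)
  rw [← ofReal_integral_eq_lintegral_ofReal hint, ← intervalIntegral.integral_of_le ht₀,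
    integral_rpow (Or.inl (by linarith)), sub_add_cancel, Real.zero_rpow hp.ne', sub_zero]
  filter_upwards [self_mem_ae_restrict measurableSet_Ioc] with t ht
  exact Real.rpow_nonneg ht.1.le _

lemma lintegral_Ioi_ofReal_rpow_neg_two {t₀ : ℝ} (ht₀ : 0 < t₀) :
    ∫⁻ t in Ioi t₀, ENNReal.ofReal (t ^ (-2 : ℝ)) = ENNReal.ofReal t₀⁻¹ := by
  rw [← ofReal_integral_eq_lintegral_ofReal (integrableOn_Ioi_rpow_of_lt (by norm_num) ht₀),
    integral_Ioi_rpow_of_lt (by norm_num) ht₀]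
  · norm_num [Real.rpow_neg_one]
  · filter_upwards [self_mem_ae_restrict measurableSet_Ioi] with t ht
    exact Real.rpow_nonneg (ht₀.trans ht).le _

lemma one_add_ofReal_rpow_one_div_le_two {p : ℝ} (hp : 1 ≤ p) :
    (1 + ENNReal.ofReal p) ^ (1 / p) ≤ 2 := by
  have hbernoulli : 1 + p ≤ (2 : ℝ) ^ p := by
    simpa [one_add_one_eq_two] using one_add_mul_self_le_rpow_one_add (s := 1) (by norm_num) hp
  rw [one_div, ENNReal.rpow_inv_le_iff (by linarith), ← ENNReal.ofReal_one,
    ← ENNReal.ofReal_add zero_le_one (by linarith), ← ENNReal.ofReal_ofNat 2,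
    ENNReal.ofReal_rpow_of_pos two_pos]
  exact ENNReal.ofReal_le_ofReal hbernoulli

lemma ofReal_rpow_neg_le_two_rpow_mul {θ : ℝ} (hθ : 0 ≤ θ) {p : ℝ} (hp : 1 ≤ p) :
    ENNReal.ofReal p ^ (-θ) ≤ 2 ^ θ * ENNReal.ofReal (p + 1) ^ (-θ) := by
  have hreal : p ^ (-θ) ≤ 2 ^ θ * (p + 1) ^ (-θ) :=
    calc p ^ (-θ) = 2 ^ θ * (2 * p) ^ (-θ) := by
          rw [Real.mul_rpow zero_le_two (by linarith), ← mul_assoc, ← Real.rpow_add two_pos]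
          simp
      _ ≤ 2 ^ θ * (p + 1) ^ (-θ) := by
          refine mul_le_mul_of_nonneg_left ?_ (by positivity)
          exact Real.rpow_le_rpow_of_nonpos (by linarith) (by linarith) (by linarith)
  rw [ENNReal.ofReal_rpow_of_pos (by linarith), ENNReal.ofReal_rpow_of_pos (by linarith),
    ← ENNReal.ofReal_ofNat 2, ENNReal.ofReal_rpow_of_pos two_pos,
    ← ENNReal.ofReal_mul (by positivity)]
  exact ENNReal.ofReal_le_ofReal hreal

section WeakNorm

variable {α : Type*} [MeasurableSpace α]

noncomputable def weakNormRpow (μ : Measure α) (p : ℝ) (f : α → ℝ) : ℝ≥0∞ :=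
  ⨆ (t : ℝ) (_ : 0 < t), ENNReal.ofReal t ^ p * μ {x | t < |f x|}

lemma weakMp_eq_weakNormRpow_average (μ : Measure α) (p : ℝ) (f : α → ℝ) :
    weakMp μ p f = weakNormRpow ((μ univ)⁻¹ • μ) p f ^ (1 / p) := by
  simp only [weakMp, weakNormRpow, Measure.smul_apply, smul_eq_mul, ENNReal.mul_iSup,
    mul_left_comm]

variable {μ : Measure α} {f : α → ℝ} {p : ℝ}

lemma eLpNorm_ofReal_eq_lintegral (f : α → ℝ) (hp : 0 < p) :
    eLpNorm f (ENNReal.ofReal p) μ = (∫⁻ x, ‖f x‖ₑ ^ p ∂μ) ^ (1 / p) := by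
  rw [eLpNorm_eq_lintegral_rpow_enorm_toReal (by simpa using hp) ENNReal.ofReal_ne_top,
    ENNReal.toReal_ofReal hp.le]

lemma grandNorm_eq_iSup_eLpNorm_average (μ : Measure α) (θ : ℝ) (f : α → ℝ) :
    grandNorm μ θ f = ⨆ (p : ℝ) (_ : 1 ≤ p),
      ENNReal.ofReal p ^ (-θ) * eLpNorm f (ENNReal.ofReal p) ((μ univ)⁻¹ • μ) := by
  refine iSup_congr fun p => iSup_congr fun hp => ?_
  rw [eLpNorm_ofReal_eq_lintegral f (by linarith), lintegral_smul_measure]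
  rfl

lemma le_weakNormRpow {t : ℝ} (ht : 0 < t) :
    ENNReal.ofReal t ^ p * μ {x | t < |f x|} ≤ weakNormRpow μ p f :=
  le_iSup₂ (f := fun (t : ℝ) (_ : 0 < t) => ENNReal.ofReal t ^ p * μ {x | t < |f x|}) t ht

lemma measure_lt_abs_le_weakNormRpow {t : ℝ} (ht : 0 < t) :
    μ {x | t < |f x|} ≤ weakNormRpow μ p f * ENNReal.ofReal (t ^ (-p)) := by
  have ht' : ENNReal.ofReal t ^ p ≠ 0 := by simp [ENNReal.rpow_eq_zero_iff, ht]
  rw [← ENNReal.ofReal_rpow_of_pos ht, ENNReal.rpow_neg, ← div_eq_mul_inv,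
    ENNReal.le_div_iff_mul_le (Or.inl ht') (Or.inl (by finiteness)), mul_comm]
  exact le_weakNormRpow ht

lemma weakNormRpow_rpow_le_eLpNorm (hf : AEStronglyMeasurable f μ) (hp : 0 < p) :
    weakNormRpow μ p f ^ (1 / p) ≤ eLpNorm f (ENNReal.ofReal p) μ := by
  rw [one_div, ENNReal.rpow_inv_le_iff hp]
  refine iSup₂_le fun t ht => ?_
  have hcheb := mul_meas_ge_le_pow_eLpNorm' μ (by simpa using hp) ENNReal.ofReal_ne_top hf
    (ENNReal.ofReal t)
  rw [ENNReal.toReal_ofReal hp.le] at hcheb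
  refine le_trans ?_ hcheb
  gcongr with x
  intro hx
  rw [Real.enorm_eq_ofReal_abs]
  exact ENNReal.ofReal_le_ofReal hx.le

lemma measure_lt_abs_mul_rpow_le_weakNormRpow {t : ℝ} (ht : 0 < t) :
    μ {x | t < |f x|} * ENNReal.ofReal (t ^ (p - 1)) ≤
      weakNormRpow μ (p + 1) f * ENNReal.ofReal (t ^ (-2 : ℝ)) :=
  calc μ {x | t < |f x|} * ENNReal.ofReal (t ^ (p - 1))
      ≤ weakNormRpow μ (p + 1) f * ENNReal.ofReal (t ^ (-(p + 1))) *
          ENNReal.ofReal (t ^ (p - 1)) := by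
        gcongr
        exact measure_lt_abs_le_weakNormRpow ht
    _ = weakNormRpow μ (p + 1) f * ENNReal.ofReal (t ^ (-2 : ℝ)) := by
        rw [mul_assoc, ← ENNReal.ofReal_mul (Real.rpow_nonneg ht.le _), ← Real.rpow_add ht]
        ring_nf

lemma lintegral_enorm_rpow_le_split (hf : Measurable f) (hp : 0 < p) {t₀ : ℝ} (ht₀ : 0 < t₀) :
    ∫⁻ x, ‖f x‖ₑ ^ p ∂μ ≤ μ univ * ENNReal.ofReal t₀ ^ p +
      ENNReal.ofReal p * (weakNormRpow μ (p + 1) f * ENNReal.ofReal t₀⁻¹) := by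
  have habs : ∀ x, ‖f x‖ₑ ^ p = ENNReal.ofReal (|f x| ^ p) := fun x => by
    rw [Real.enorm_eq_ofReal_abs, ENNReal.ofReal_rpow_of_nonneg (abs_nonneg _) hp.le]
  simp_rw [habs]
  rw [lintegral_rpow_eq_lintegral_meas_lt_mul μ (.of_forall fun x => abs_nonneg (f x))
      hf.abs.aemeasurable hp, ← Ioc_union_Ioi_eq_Ioi ht₀.le,
    lintegral_union measurableSet_Ioi Ioc_disjoint_Ioi_same, mul_add]
  gcongr ?_ + ?_
  · calc ENNReal.ofReal p * ∫⁻ t in Ioc 0 t₀, μ {x | t < |f x|} * ENNReal.ofReal (t ^ (p - 1))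
        ≤ ENNReal.ofReal p * ∫⁻ t in Ioc 0 t₀, μ univ * ENNReal.ofReal (t ^ (p - 1)) := by
          gcongr with t
          exact subset_univ _
      _ = μ univ * ENNReal.ofReal t₀ ^ p := by
          rw [lintegral_const_mul _ (by fun_prop), lintegral_Ioc_ofReal_rpow_sub_one hp ht₀.le,
            mul_left_comm, ← ENNReal.ofReal_mul hp.le, mul_div_cancel₀ _ hp.ne',
            ENNReal.ofReal_rpow_of_pos ht₀]
  · gcongr ENNReal.ofReal p * ?_
    calc ∫⁻ t in Ioi t₀, μ {x | t < |f x|} * ENNReal.ofReal (t ^ (p - 1))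
        ≤ ∫⁻ t in Ioi t₀, weakNormRpow μ (p + 1) f * ENNReal.ofReal (t ^ (-2 : ℝ)) :=
          setLIntegral_mono' measurableSet_Ioi fun t ht =>
            measure_lt_abs_mul_rpow_le_weakNormRpow (ht₀.trans ht)
      _ = weakNormRpow μ (p + 1) f * ENNReal.ofReal t₀⁻¹ := by
          rw [lintegral_const_mul _ (by fun_prop), lintegral_Ioi_ofReal_rpow_neg_two ht₀]

lemma lintegral_enorm_rpow_le_of_weakNormRpow_le [IsProbabilityMeasure μ] (hf : Measurable f)
    (hp : 0 < p) {t : ℝ} (ht : 0 < t) (hS : weakNormRpow μ (p + 1) f ≤ ENNReal.ofReal t ^ (p + 1)) :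
    ∫⁻ x, ‖f x‖ₑ ^ p ∂μ ≤ (1 + ENNReal.ofReal p) * ENNReal.ofReal t ^ p := by
  have ht0 : ENNReal.ofReal t ≠ 0 := by simpa using ht
  calc ∫⁻ x, ‖f x‖ₑ ^ p ∂μ
      ≤ μ univ * ENNReal.ofReal t ^ p +
          ENNReal.ofReal p * (weakNormRpow μ (p + 1) f * ENNReal.ofReal t⁻¹) :=
        lintegral_enorm_rpow_le_split hf hp ht
    _ ≤ 1 * ENNReal.ofReal t ^ p +
          ENNReal.ofReal p * (ENNReal.ofReal t ^ (p + 1) * (ENNReal.ofReal t)⁻¹) := by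
        rw [measure_univ, ENNReal.ofReal_inv_of_pos ht]
        gcongr
    _ = (1 + ENNReal.ofReal p) * ENNReal.ofReal t ^ p := by
        rw [ENNReal.rpow_add _ _ ht0 ENNReal.ofReal_ne_top, ENNReal.rpow_one, mul_assoc,
          ENNReal.mul_inv_cancel ht0 ENNReal.ofReal_ne_top]
        ring

/-- The split level is taken just above the weak norm, which may vanish. -/
lemma lintegral_enorm_rpow_le_weakNormRpow [IsProbabilityMeasure μ] (hf : Measurable f)
    (hp : 0 < p) :
    ∫⁻ x, ‖f x‖ₑ ^ p ∂μ ≤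
      (1 + ENNReal.ofReal p) * (weakNormRpow μ (p + 1) f ^ (1 / (p + 1))) ^ p := by
  set W := weakNormRpow μ (p + 1) f ^ (1 / (p + 1))
  rcases eq_or_ne W ⊤ with hW | hW
  · simp [hW, ENNReal.top_rpow_of_pos hp]
  have hlim : Tendsto (fun t => (1 + ENNReal.ofReal p) * ENNReal.ofReal t ^ p)
      (𝓝[>] W.toReal) (𝓝 ((1 + ENNReal.ofReal p) * W ^ p)) := by
    have hcont : Continuous fun t => (1 + ENNReal.ofReal p) * ENNReal.ofReal t ^ p :=
      (ENNReal.continuous_const_mul (by finiteness)).comp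
        (ENNReal.continuous_rpow_const.comp ENNReal.continuous_ofReal)
    simpa [ENNReal.ofReal_toReal hW] using (hcont.tendsto W.toReal).mono_left nhdsWithin_le_nhds
  refine ge_of_tendsto hlim (eventually_nhdsWithin_of_forall fun t (ht : W.toReal < t) => ?_)
  have hWt : W ≤ ENNReal.ofReal t := by
    simpa [ENNReal.ofReal_toReal hW] using ENNReal.ofReal_le_ofReal ht.le
  refine lintegral_enorm_rpow_le_of_weakNormRpow_le hf hp (ENNReal.toReal_nonneg.trans_lt ht) ?_
  calc weakNormRpow μ (p + 1) f = W ^ (p + 1) := by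
        rw [← ENNReal.rpow_mul, one_div_mul_cancel (by linarith), ENNReal.rpow_one]
    _ ≤ ENNReal.ofReal t ^ (p + 1) := by gcongr

lemma eLpNorm_le_two_mul_weakNormRpow [IsProbabilityMeasure μ] (hf : Measurable f) (hp : 1 ≤ p) :
    eLpNorm f (ENNReal.ofReal p) μ ≤ 2 * weakNormRpow μ (p + 1) f ^ (1 / (p + 1)) := by
  have hp0 : 0 < p := by linarith
  set W := weakNormRpow μ (p + 1) f ^ (1 / (p + 1))
  rw [eLpNorm_ofReal_eq_lintegral f hp0]
  calc (∫⁻ x, ‖f x‖ₑ ^ p ∂μ) ^ (1 / p)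
      ≤ ((1 + ENNReal.ofReal p) * W ^ p) ^ (1 / p) := by
        gcongr
        exact lintegral_enorm_rpow_le_weakNormRpow hf hp0
    _ = (1 + ENNReal.ofReal p) ^ (1 / p) * W := by
        rw [ENNReal.mul_rpow_of_nonneg _ _ (by positivity), ← ENNReal.rpow_mul,
          mul_one_div_cancel hp0.ne', ENNReal.rpow_one]
    _ ≤ 2 * W := by
        gcongr
        exact one_add_ofReal_rpow_one_div_le_two hp

lemma ofReal_rpow_neg_mul_eLpNorm_le [IsProbabilityMeasure μ] {θ : ℝ} (hθ : 0 ≤ θ)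
    (hf : Measurable f) (hp : 1 ≤ p) :
    ENNReal.ofReal p ^ (-θ) * eLpNorm f (ENNReal.ofReal p) μ ≤
      2 ^ θ * 2 * (ENNReal.ofReal (p + 1) ^ (-θ) * weakNormRpow μ (p + 1) f ^ (1 / (p + 1))) :=
  calc _ ≤ (2 ^ θ * ENNReal.ofReal (p + 1) ^ (-θ)) *
        (2 * weakNormRpow μ (p + 1) f ^ (1 / (p + 1))) :=
      mul_le_mul' (ofReal_rpow_neg_le_two_rpow_mul hθ hp) (eLpNorm_le_two_mul_weakNormRpow hf hp)
    _ = _ := by ring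

end WeakNorm

/-- Theorem 3.1: `L^{θ,∞}_{weak}(Ω) = L^{θ,∞)}(Ω)`. -/
theorem grand_eq_weak {α : Type*} [MeasurableSpace α] (μ : Measure α)
    (hμ0 : μ Set.univ ≠ 0) (hμtop : μ Set.univ ≠ ⊤)
    (θ : ℝ) (hθ : 0 ≤ θ)
    (f : α → ℝ) (hmeas : Measurable f) :
    ((∀ p : ℝ, 1 ≤ p → MemLp f (ENNReal.ofReal p) μ) ∧ grandNorm μ θ f < ⊤) ↔
      ((∀ p : ℝ, 1 ≤ p → weakMp μ p f < ⊤) ∧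
        (⨆ (p : ℝ) (_ : 1 ≤ p), ENNReal.ofReal p ^ (-θ) * weakMp μ p f) < ⊤) := by
  have : IsFiniteMeasure μ := ⟨hμtop.lt_top⟩
  have : NeZero μ := ⟨fun h => hμ0 (by simp [h])⟩
  set ν := (μ univ)⁻¹ • μ
  have hμν : μ = μ univ • ν := by
    rw [smul_smul, ENNReal.mul_inv_cancel hμ0 hμtop, one_smul]
  simp only [grandNorm_eq_iSup_eLpNorm_average, weakMp_eq_weakNormRpow_average]
  constructor
  · rintro ⟨hLp, hgrand⟩
    have hle (p : ℝ) (hp : 1 ≤ p) :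
        weakNormRpow ν p f ^ (1 / p) ≤ eLpNorm f (ENNReal.ofReal p) ν :=
      weakNormRpow_rpow_le_eLpNorm hmeas.aestronglyMeasurable (by linarith)
    exact ⟨fun p hp => (hle p hp).trans_lt ((hLp p hp).smul_measure (by simpa using hμ0)).2,
      (iSup₂_mono fun p hp => by gcongr; exact hle p hp).trans_lt hgrand⟩
  · rintro ⟨hweak, hsup⟩
    refine ⟨fun p hp => ?_, lt_of_le_of_lt (iSup₂_le fun p hp => ?_)
      (ENNReal.mul_lt_top (by finiteness : (2 : ℝ≥0∞) ^ θ * 2 < ⊤) hsup)⟩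
    · refine MemLp.of_measure_le_smul hμtop hμν.le ⟨hmeas.aestronglyMeasurable, ?_⟩
      exact (eLpNorm_le_two_mul_weakNormRpow hmeas hp).trans_lt
        (ENNReal.mul_lt_top ENNReal.ofNat_lt_top (hweak _ (by linarith)))
    · refine (ofReal_rpow_neg_mul_eLpNorm_le hθ hmeas hp).trans ?_
      gcongr
      exact le_iSup₂ (f := fun (q : ℝ) (_ : 1 ≤ q) =>
        ENNReal.ofReal q ^ (-θ) * weakNormRpow ν q f ^ (1 / q)) (p + 1) (by linarith)
end
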